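/- arXiv:2510.24975 — 2 statements merged into one kernel-verified Lean document; each statement's English description precedes it below -/
import Mathlib

section
/- Take h(x) = max(0, x). For symmetric operands O = (o₁,...,o_n, -o₁,...,-o_n), the implicitly defined MP function z = φ(o₁,...,oₙ) satisfying ∑_{i=1}^n [max(0, oᵢ - z) + max(0, -oᵢ - z)] = γ (with γ > 0 fixed) satisfies |φ(o) - φ(o')| ≤ ‖o - o'‖₁ for all o, o' ∈ ℝⁿ; i.e., φ is 1-Lipschitz with respect to the ℓ¹ norm. -/
/-- Strict decrease of a symmetric ReLU pair when it is positive. -/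
lemma relu_pair_strict (a u v : ℝ) (huv : v < u)
    (hpos : 0 < max 0 (a - v) + max 0 (-a - v)) :
    max 0 (a - u) + max 0 (-a - u) < max 0 (a - v) + max 0 (-a - v) := by
  rcases le_or_gt (a - v) 0 with h1 | h1
  · -- then -a - v > 0
    have h2 : 0 < -a - v := by
      by_contra h2
      push_neg at h2
      simp [max_eq_left, h1, h2] at hpos
    have e2 : max 0 (-a - v) = -a - v := max_eq_right h2.le
    have e1 : max 0 (a - v) = 0 := max_eq_left h1
    have hb : max 0 (a - u) = 0 := max_eq_left (by linarith)
    rcases le_or_gt (-a - u) 0 with h3 | h3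
    · simp [e1, e2, hb, max_eq_left h3]; linarith
    · rw [e1, e2, hb, max_eq_right h3.le]; linarith
  · have e1 : max 0 (a - v) = a - v := max_eq_right h1.le
    have hmono : max 0 (-a - u) ≤ max 0 (-a - v) :=
      max_le_max le_rfl (by linarith)
    have hlt : max 0 (a - u) < a - v := by
      rcases le_or_gt (a - u) 0 with h3 | h3
      · rw [max_eq_left h3]; linarith
      · rw [max_eq_right h3.le]; linarith
    rw [e1]; linarith

lemma mp_relu_key (n : ℕ) (γ : ℝ) (hγ : 0 < γ)
    (φ : (Fin n → ℝ) → ℝ)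
    (hφ : ∀ o : Fin n → ℝ,
      ∑ i, (max 0 (o i - φ o) + max 0 (-(o i) - φ o)) = γ)
    (o o' : Fin n → ℝ) :
    φ o - φ o' ≤ ∑ i, |o i - o' i| := by
  set z := φ o with hz
  set z' := φ o' with hz'
  set D : ℝ := ∑ i, |o i - o' i| with hD
  by_contra hcon
  push_neg at hcon
  have hzz : z' < z - D := by linarith
  -- each term at (o, z) is dominated by the term at (o', z - D)
  have hterm : ∀ i ∈ Finset.univ (α := Fin n),
      max 0 (o i - z) + max 0 (-(o i) - z)
        ≤ max 0 (o' i - (z - D)) + max 0 (-(o' i) - (z - D)) := by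
    intro i _
    have hle : |o i - o' i| ≤ D := by
      apply Finset.single_le_sum (f := fun j => |o j - o' j|)
        (fun j _ => abs_nonneg _) (Finset.mem_univ i)
    have h1 : o i - o' i ≤ D := (le_abs_self _).trans hle
    have h2 : o' i - o i ≤ D := by
      have := (neg_le_abs (o i - o' i)).trans hle
      linarith
    exact add_le_add (max_le_max le_rfl (by linarith))
      (max_le_max le_rfl (by linarith))
  have hsum1 : γ ≤ ∑ i, (max 0 (o' i - (z - D)) + max 0 (-(o' i) - (z - D))) := by
    rw [← hφ o]
    exact Finset.sum_le_sum hterm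
  -- some term at (o', z') is positive
  have hexists : ∃ j : Fin n, 0 < max 0 (o' j - z') + max 0 (-(o' j) - z') := by
    by_contra hno
    push_neg at hno
    have : ∑ i, (max 0 (o' i - z') + max 0 (-(o' i) - z')) ≤ 0 :=
      Finset.sum_nonpos (fun i _ => hno i)
    rw [hφ o'] at this
    linarith
  obtain ⟨j, hj⟩ := hexists
  have hsum2 : ∑ i, (max 0 (o' i - (z - D)) + max 0 (-(o' i) - (z - D)))
      < ∑ i, (max 0 (o' i - z') + max 0 (-(o' i) - z')) := by
    apply Finset.sum_lt_sum
    · intro i _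
      exact add_le_add (max_le_max le_rfl (by linarith))
        (max_le_max le_rfl (by linarith))
    · exact ⟨j, Finset.mem_univ j, relu_pair_strict (o' j) (z - D) z' hzz hj⟩
  rw [hφ o'] at hsum2
  linarith

/-- The ReLU margin-propagation function with symmetric operands is 1-Lipschitz
with respect to the ℓ¹ norm: if `φ` satisfies
`∑ i, (max 0 (oᵢ - φ o) + max 0 (-oᵢ - φ o)) = γ` for all `o`, then
`|φ o - φ o'| ≤ ∑ i, |oᵢ - o'ᵢ|`. -/
theorem mp_relu_lipschitz_l1 (n : ℕ) (γ : ℝ) (hγ : 0 < γ)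
    (φ : (Fin n → ℝ) → ℝ)
    (hφ : ∀ o : Fin n → ℝ,
      ∑ i, (max 0 (o i - φ o) + max 0 (-(o i) - φ o)) = γ)
    (o o' : Fin n → ℝ) :
    |φ o - φ o'| ≤ ∑ i, |o i - o' i| := by
  rw [abs_sub_le_iff]
  constructor
  · exact mp_relu_key n γ hγ φ hφ o o'
  · have := mp_relu_key n γ hγ φ hφ o' o
    calc φ o' - φ o ≤ ∑ i, |o' i - o i| := this
      _ = ∑ i, |o i - o' i| := by
          exact Finset.sum_congr rfl (fun i _ => abs_sub_comm _ _)
end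

section
/- Let h: ℝ → ℝ be twice continuously differentiable, monotonically increasing and convex with h' > 0. For symmetric operands, the MP function φ: ℝⁿ → ℝ defined implicitly by ∑_{i=1}^n [h(oᵢ - z) + h(-oᵢ - z)] = γ (γ > 0 fixed) is a convex function of (o₁,...,oₙ). -/
/-- Convexity of the margin-propagation function with symmetric operands:
for `h` twice continuously differentiable, monotone increasing and convex with
`h' > 0`, the function `φ` defined implicitly by
`∑ i, (h (oᵢ - φ o) + h (-oᵢ - φ o)) = γ` (with `γ > 0` fixed) is convex. -/
theorem mp_symmetric_convex (n : ℕ) (h : ℝ → ℝ)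
    (hsmooth : ContDiff ℝ 2 h) (hmono : Monotone h)
    (hconv : ConvexOn ℝ Set.univ h) (hderiv : ∀ x, 0 < deriv h x)
    (γ : ℝ) (hγ : 0 < γ) (φ : (Fin n → ℝ) → ℝ)
    (hφ : ∀ o : Fin n → ℝ,
      ∑ i, (h (o i - φ o) + h (-(o i) - φ o)) = γ) :
    ConvexOn ℝ Set.univ φ := by
  have hsm : StrictMono h := strictMono_of_deriv_pos hderiv
  rcases Nat.eq_zero_or_pos n with hn | hn
  · exfalso
    have := hφ (fun _ => 0)
    subst hn
    simp at this
    linarith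
  haveI : Nonempty (Fin n) := ⟨⟨0, hn⟩⟩
  refine ⟨convex_univ, ?_⟩
  intro a _ b _ s t hs ht hst
  set z : ℝ := s * φ a + t * φ b with hz
  set o : Fin n → ℝ := s • a + t • b with ho
  have key : ∑ i, (h (o i - z) + h (-(o i) - z)) ≤ γ := by
    have step : ∀ i : Fin n, h (o i - z) + h (-(o i) - z) ≤
        s * (h (a i - φ a) + h (-(a i) - φ a)) +
        t * (h (b i - φ b) + h (-(b i) - φ b)) := by
      intro i
      have h1 := hconv.2 (Set.mem_univ (a i - φ a)) (Set.mem_univ (b i - φ b)) hs ht hst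
      have h2 := hconv.2 (Set.mem_univ (-(a i) - φ a)) (Set.mem_univ (-(b i) - φ b)) hs ht hst
      have e1 : o i - z = s • (a i - φ a) + t • (b i - φ b) := by
        simp [ho, hz, smul_eq_mul]; ring
      have e2 : -(o i) - z = s • (-(a i) - φ a) + t • (-(b i) - φ b) := by
        simp [ho, hz, smul_eq_mul]; ring
      rw [e1, e2]
      simp only [smul_eq_mul] at h1 h2 ⊢
      linarith
    calc ∑ i, (h (o i - z) + h (-(o i) - z))
        ≤ ∑ i, (s * (h (a i - φ a) + h (-(a i) - φ a)) +
            t * (h (b i - φ b) + h (-(b i) - φ b))) :=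
          Finset.sum_le_sum fun i _ => step i
      _ = s * γ + t * γ := by
          rw [Finset.sum_add_distrib, ← Finset.mul_sum, ← Finset.mul_sum, hφ a, hφ b]
      _ = γ := by rw [← add_mul, hst, one_mul]
  show φ o ≤ z
  by_contra hlt
  push_neg at hlt
  have : γ < ∑ i, (h (o i - z) + h (-(o i) - z)) := by
    conv_lhs => rw [← hφ o]
    apply Finset.sum_lt_sum_of_nonempty Finset.univ_nonempty
    intro i _
    have t1 := hsm (show o i - φ o < o i - z by linarith)
    have t2 := hsm (show -(o i) - φ o < -(o i) - z by linarith)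
    linarith
  linarith
end
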